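/- Let P be a logic program over a finite set of atoms A and let π be a symmetry of P. Then for every M ⊆ A, M is an answer set of P if and only if M^π is an answer set of P. -/
import Mathlib


/-- A (disjunctive) rule over a set of atoms `A`: a triple of finite sets of atoms
(head, positive body, negative body). -/
structure Rule (A : Type*) where
  head : Finset A
  pos : Finset A
  neg : Finset A
deriving DecidableEq

variable {A : Type*} [DecidableEq A]

/-- `M` is a model of a rule `(H, B⁺, ∅)` (the negative body is ignored; it is used
only on rules of reducts, whose negative bodies are empty): if `B⁺ ⊆ M` then `H ∩ M ≠ ∅`. -/
def Rule.models (M : Finset A) (r : Rule A) : Prop :=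
  r.pos ⊆ M → (r.head ∩ M).Nonempty

/-- The reduct `P^M` of a program `P` relative to `M`. -/
def reduct (P : Finset (Rule A)) (M : Finset A) : Finset (Rule A) :=
  (P.filter fun r => r.neg ∩ M = ∅).image fun r => ⟨r.head, r.pos, ∅⟩

/-- `M` is a ⊆-minimal model of the set of rules `Q`. -/
def IsMinModel (Q : Finset (Rule A)) (M : Finset A) : Prop :=
  (∀ r ∈ Q, Rule.models M r) ∧ ∀ N : Finset A, N ⊂ M → ¬ (∀ r ∈ Q, Rule.models N r)

/-- `M` is an answer set of `P` if `M` is a ⊆-minimal model of the reduct `P^M`. -/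
def IsAnswerSet (P : Finset (Rule A)) (M : Finset A) : Prop :=
  IsMinModel (reduct P M) M

/-- The image of a rule under a permutation of atoms. -/
def Rule.perm (π : Equiv.Perm A) (r : Rule A) : Rule A :=
  ⟨r.head.image π, r.pos.image π, r.neg.image π⟩

/-- The image of a program under a permutation of atoms. -/
def permProg (π : Equiv.Perm A) (P : Finset (Rule A)) : Finset (Rule A) :=
  P.image (Rule.perm π)

/-- A symmetry of a logic program `P` is a permutation of its atoms that does not
change `P`. -/
def IsSymmetry (π : Equiv.Perm A) (P : Finset (Rule A)) : Prop :=
  permProg π P = P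

lemma image_inter_perm (π : Equiv.Perm A) (s t : Finset A) :
    s.image π ∩ t.image π = (s ∩ t).image π :=
  (Finset.image_inter s t π.injective).symm

lemma models_perm (π : Equiv.Perm A) (M : Finset A) (r : Rule A) :
    Rule.models (M.image π) (r.perm π) ↔ Rule.models M r := by
  unfold Rule.models Rule.perm
  simp [image_inter_perm, Finset.image_subset_image_iff π.injective,
    Finset.image_nonempty]

lemma perm_symm_perm (π : Equiv.Perm A) (r : Rule A) :
    Rule.perm π.symm (Rule.perm π r) = r := by
  cases r
  simp [Rule.perm, Finset.image_image]

lemma permProg_perm_inv (π : Equiv.Perm A) (P : Finset (Rule A)) :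
    permProg π.symm (permProg π P) = P := by
  unfold permProg
  rw [Finset.image_image]
  have : (Rule.perm π.symm ∘ Rule.perm π) = id := by
    funext r; exact perm_symm_perm π r
  rw [this, Finset.image_id]

lemma reduct_permProg (π : Equiv.Perm A) (P : Finset (Rule A)) (M : Finset A) :
    reduct (permProg π P) (M.image π) = permProg π (reduct P M) := by
  unfold reduct permProg
  rw [Finset.filter_image, Finset.image_image, Finset.image_image]
  congr 1
  · ext r
    simp only [Finset.mem_filter, Rule.perm, image_inter_perm,
      Finset.image_eq_empty]

lemma image_image_inv (π : Equiv.Perm A) (N : Finset A) :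
    (N.image π.symm).image π = N := by
  rw [Finset.image_image]; simp

lemma image_inv_image (π : Equiv.Perm A) (N : Finset A) :
    (N.image π).image π.symm = N := by
  rw [Finset.image_image]; simp

lemma isMinModel_image (π : Equiv.Perm A) (Q : Finset (Rule A)) (M : Finset A)
    (h : IsMinModel Q M) : IsMinModel (permProg π Q) (M.image π) := by
  obtain ⟨h1, h2⟩ := h
  constructor
  · intro r hr
    obtain ⟨s, hs, rfl⟩ := Finset.mem_image.mp hr
    exact (models_perm π M s).mpr (h1 s hs)
  · intro N hN hmod
    have hsub : N.image π.symm ⊆ M := by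
      intro a ha
      obtain ⟨b, hb, rfl⟩ := Finset.mem_image.mp ha
      obtain ⟨c, hc, rfl⟩ := Finset.mem_image.mp (hN.subset hb)
      simpa using hc
    have hne : N.image π.symm ≠ M := by
      intro he
      apply hN.ne
      rw [← he, image_image_inv]
    refine h2 (N.image π.symm) (lt_of_le_of_ne hsub hne) ?_
    intro r hr
    have := hmod (r.perm π) (Finset.mem_image_of_mem _ hr)
    rw [← image_image_inv π N] at this
    exact (models_perm π _ r).mp this

/-- **Symmetries preserve answer sets.** If `π` is a symmetry of a logic program `P`
over a finite set of atoms `A`, then for every `M ⊆ A`, `M` is an answer set of `P`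
iff `M^π` is an answer set of `P`. -/
theorem isAnswerSet_iff_image_of_symmetry {A : Type*} [DecidableEq A] [Fintype A]
    (P : Finset (Rule A)) (π : Equiv.Perm A) (hπ : IsSymmetry π P) (M : Finset A) :
    IsAnswerSet P M ↔ IsAnswerSet P (M.image π) := by
  have hπ' : IsSymmetry π.symm P := by
    unfold IsSymmetry at *
    conv_lhs => rw [← hπ]
    rw [permProg_perm_inv]
  constructor
  · intro h
    unfold IsAnswerSet at *
    rw [← hπ, reduct_permProg]
    exact isMinModel_image π _ M h
  · intro h
    unfold IsAnswerSet at *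
    have := isMinModel_image π.symm _ _ h
    rw [image_inv_image] at this
    rwa [← reduct_permProg π.symm P (M.image π), image_inv_image, hπ'] at this
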